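/- Let z be a complex number with |z| = 1 and z ≠ 1. Then limsup_{n→∞} |z^n − 1| ≥ |e^{2πi/3} − 1| = √3. -/

import Mathlib

/-!
Write `z = exp (iθ)` with `0 < |θ| ≤ π`. Some multiple `n|θ|` lands in `[2π/3, 4π/3]`: either
`|θ|` itself does, or `|θ| < 2π/3` and the first multiple past `2π/3` overshoots by less than
`|θ|`. For that `n`, `|z ^ n - 1| = 2 |sin (nθ/2)| ≥ 2 sin (π/3) = √3`. Applying this to
`z ^ (m + 1)` (or using periodicity when `z ^ (m + 1) = 1`) gives such `n` beyond every `m`.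
-/

open Filter Real Complex

namespace Real

lemma sqrt_three_div_two_le_sin {y : ℝ} (h₁ : π / 3 ≤ y) (h₂ : y ≤ 2 * π / 3) :
    √3 / 2 ≤ sin y := by
  rw [← sin_pi_div_three]
  rcases le_total y (π / 2) with hy | hy
  · exact sin_le_sin_of_le_of_le_pi_div_two (by linarith [pi_pos]) hy h₁
  · rw [← sin_pi_sub y]
    exact sin_le_sin_of_le_of_le_pi_div_two (by linarith [pi_pos]) (by linarith) (by linarith)

lemma exists_nat_mul_mem_Icc {θ : ℝ} (h₀ : 0 < θ) (hπ : θ ≤ π) :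
    ∃ n : ℕ, 2 * π / 3 ≤ n * θ ∧ n * θ ≤ 4 * π / 3 := by
  rcases le_total (2 * π / 3) θ with hθ | hθ
  · exact ⟨1, by simpa using hθ, by linarith [pi_pos]⟩
  · set n := ⌈2 * π / 3 / θ⌉₊
    have hprev : ((n : ℝ) - 1) * θ < 2 * π / 3 :=
      (lt_div_iff₀ h₀).1 (sub_lt_iff_lt_add.2 (Nat.ceil_lt_add_one (by positivity)))
    exact ⟨n, (div_le_iff₀ h₀).1 (Nat.le_ceil _), by linarith⟩

end Real

namespace Complex

lemma norm_pow_sub_one_of_norm_eq_one {w : ℂ} (hw : ‖w‖ = 1) (n : ℕ) :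
    ‖w ^ n - 1‖ = 2 * |Real.sin (n * |arg w| / 2)| := by
  have hpow : w ^ n = exp (I * ↑(n * arg w)) := by
    conv_lhs => rw [← norm_mul_exp_arg_mul_I w, hw, ofReal_one, one_mul, ← exp_nat_mul]
    push_cast
    ring_nf
  rw [hpow, norm_exp_I_mul_ofReal_sub_one, norm_mul, Real.norm_eq_abs, Real.norm_eq_abs,
    abs_two]
  rcases abs_cases (arg w) with ⟨h, -⟩ | ⟨h, -⟩
  · rw [h]
  · rw [h, mul_neg, neg_div, Real.sin_neg, abs_neg]

lemma exists_sqrt_three_le_norm_pow_sub_one {w : ℂ} (hw : ‖w‖ = 1) (hw1 : w ≠ 1) :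
    ∃ n : ℕ, 0 < n ∧ √3 ≤ ‖w ^ n - 1‖ := by
  have harg : arg w ≠ 0 := fun h ↦ hw1 <| by
    rw [← norm_mul_exp_arg_mul_I w, hw, h]; simp
  obtain ⟨n, hlow, hupp⟩ :=
    Real.exists_nat_mul_mem_Icc (abs_pos.2 harg) (abs_arg_le_pi w)
  have hn : 0 < n := Nat.pos_of_ne_zero <| by
    rintro rfl
    simp only [CharP.cast_eq_zero, zero_mul] at hlow
    linarith [pi_pos]
  refine ⟨n, hn, ?_⟩
  have := Real.sqrt_three_div_two_le_sin (y := n * |arg w| / 2) (by linarith) (by linarith)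
  rw [norm_pow_sub_one_of_norm_eq_one hw, abs_of_nonneg (by linarith [Real.sqrt_nonneg 3])]
  linarith

lemma norm_exp_two_pi_I_div_three_sub_one : ‖exp (2 * π * I / 3) - 1‖ = √3 := by
  rw [show 2 * π * I / 3 = I * ↑(2 * π / 3) by push_cast; ring, norm_exp_I_mul_ofReal_sub_one,
    show 2 * π / 3 / 2 = π / 3 by ring, Real.sin_pi_div_three, mul_div_cancel₀ _ two_ne_zero,
    Real.norm_of_nonneg (Real.sqrt_nonneg 3)]

lemma frequently_sqrt_three_le_norm_pow_sub_one {z : ℂ} (hz : ‖z‖ = 1) (hz1 : z ≠ 1) :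
    ∃ᶠ n in atTop, √3 ≤ ‖z ^ n - 1‖ := by
  refine frequently_atTop.2 fun m ↦ ?_
  by_cases hm : z ^ (m + 1) = 1
  · obtain ⟨k, -, hk⟩ := exists_sqrt_three_le_norm_pow_sub_one hz hz1
    refine ⟨k + (m + 1) * m, by nlinarith, ?_⟩
    rwa [pow_add, pow_mul, hm, one_pow, mul_one]
  · obtain ⟨k, hk, hzk⟩ := exists_sqrt_three_le_norm_pow_sub_one
      (by rw [norm_pow, hz, one_pow]) hm
    exact ⟨(m + 1) * k, by nlinarith, by rwa [pow_mul]⟩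

end Complex

theorem stmt_0 (z : ℂ) (hz : ‖z‖ = 1) (hz1 : z ≠ 1) :
    ‖Complex.exp (2 * Real.pi * Complex.I / 3) - 1‖ ≤
      Filter.limsup (fun n : ℕ => ‖z ^ n - 1‖) Filter.atTop ∧
    ‖Complex.exp (2 * Real.pi * Complex.I / 3) - 1‖ = Real.sqrt 3 := by
  have hbdd : IsBoundedUnder (· ≤ ·) atTop fun n : ℕ ↦ ‖z ^ n - 1‖ :=
    isBoundedUnder_of ⟨2, fun n ↦ (norm_sub_le _ _).trans (by simp [hz]; norm_num)⟩
  rw [norm_exp_two_pi_I_div_three_sub_one]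
  exact ⟨le_limsup_of_frequently_le (frequently_sqrt_three_le_norm_pow_sub_one hz hz1) hbdd,
    rfl⟩
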